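/- If the symmetric block matrix [[A, Bᵀ], [B, C]] (with A of size n×n, C of size m×m, B of size m×n) is positive semidefinite, then ‖B‖ ≤ sqrt(‖A‖·‖C‖), where ‖·‖ is the operator norm. -/

import Mathlib

open Matrix

/-- Operator (spectral) norm of a real matrix. -/
noncomputable def opNorm {m n : Type*} [Fintype m] [Fintype n] [DecidableEq n]
    (A : Matrix m n ℝ) : ℝ :=
  ‖(Matrix.toEuclideanLin A).toContinuousLinearMap‖

/-!
Positivity of the quadratic form of `[[A, Bᵀ], [B, C]]` at `(t • x, y)` for every real `t` says,
through the discriminant, that `(y ⬝ B x)² ≤ (x ⬝ A x) (y ⬝ C y) ≤ ‖A‖ ‖C‖ ‖x‖² ‖y‖²`.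
Taking `y = B x` gives `‖B x‖² ≤ ‖A‖ ‖C‖ ‖x‖²`.
-/

open WithLp

variable {m n : Type*} [Fintype m] [Fintype n]

theorem opNorm_nonneg [DecidableEq n] (A : Matrix m n ℝ) : 0 ≤ opNorm A :=
  norm_nonneg _

theorem dotProduct_mulVec_le_opNorm_mul_sq [DecidableEq n] (A : Matrix n n ℝ)
    (x : EuclideanSpace ℝ n) : ofLp x ⬝ᵥ A *ᵥ ofLp x ≤ opNorm A * ‖x‖ ^ 2 :=
  calc ofLp x ⬝ᵥ A *ᵥ ofLp x = inner ℝ x (toEuclideanLin A x) := by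
        rw [EuclideanSpace.inner_eq_star_dotProduct, dotProduct_comm]; rfl
    _ ≤ ‖x‖ * ‖toEuclideanLin A x‖ := real_inner_le_norm _ _
    _ ≤ ‖x‖ * (opNorm A * ‖x‖) :=
        mul_le_mul_of_nonneg_left ((toEuclideanLin A).toContinuousLinearMap.le_opNorm x)
          (norm_nonneg x)
    _ = opNorm A * ‖x‖ ^ 2 := by ring

theorem dotProduct_fromBlocks_transpose_mulVec_sumElim (A : Matrix n n ℝ) (B : Matrix m n ℝ)
    (C : Matrix m m ℝ) (x : n → ℝ) (y : m → ℝ) :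
    Sum.elim x y ⬝ᵥ fromBlocks A Bᵀ B C *ᵥ Sum.elim x y =
      x ⬝ᵥ A *ᵥ x + 2 * (y ⬝ᵥ B *ᵥ x) + y ⬝ᵥ C *ᵥ y := by
  simp only [fromBlocks_mulVec, Sum.elim_comp_inl, Sum.elim_comp_inr, sumElim_dotProduct_sumElim,
    dotProduct_add, dotProduct_mulVec x Bᵀ, vecMul_transpose, dotProduct_comm (B *ᵥ x) y]
  ring

theorem Matrix.PosSemidef.sq_dotProduct_mulVec_le_of_fromBlocks {A : Matrix n n ℝ}
    {B : Matrix m n ℝ} {C : Matrix m m ℝ} (h : (fromBlocks A Bᵀ B C).PosSemidef)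
    (x : n → ℝ) (y : m → ℝ) :
    (y ⬝ᵥ B *ᵥ x) ^ 2 ≤ (x ⬝ᵥ A *ᵥ x) * (y ⬝ᵥ C *ᵥ y) := by
  have hquad (t : ℝ) :
      0 ≤ x ⬝ᵥ A *ᵥ x * (t * t) + 2 * (y ⬝ᵥ B *ᵥ x) * t + y ⬝ᵥ C *ᵥ y := by
    have := h.dotProduct_mulVec_nonneg (Sum.elim (t • x) y)
    simp only [star_trivial, dotProduct_fromBlocks_transpose_mulVec_sumElim, mulVec_smul,
      smul_dotProduct, dotProduct_smul, smul_eq_mul] at this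
    linarith
  have hdiscr := discrim_le_zero hquad
  rw [discrim] at hdiscr
  linarith

theorem norm_toEuclideanLin_sq_le_of_fromBlocks [DecidableEq m] [DecidableEq n]
    {A : Matrix n n ℝ} {B : Matrix m n ℝ} {C : Matrix m m ℝ}
    (h : (fromBlocks A Bᵀ B C).PosSemidef) (x : EuclideanSpace ℝ n) :
    ‖toEuclideanLin B x‖ ^ 2 ≤ opNorm A * opNorm C * ‖x‖ ^ 2 := by
  set y := toEuclideanLin B x
  have hy : ‖y‖ ^ 2 = ofLp y ⬝ᵥ B *ᵥ ofLp x := by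
    rw [← real_inner_self_eq_norm_sq, EuclideanSpace.inner_eq_star_dotProduct]; rfl
  have hC : 0 ≤ ofLp y ⬝ᵥ C *ᵥ ofLp y := (h.submatrix Sum.inr).dotProduct_mulVec_nonneg _
  have hA : 0 ≤ opNorm A * ‖x‖ ^ 2 := mul_nonneg (opNorm_nonneg A) (sq_nonneg _)
  have key : ‖y‖ ^ 2 * ‖y‖ ^ 2 ≤ opNorm A * opNorm C * ‖x‖ ^ 2 * ‖y‖ ^ 2 :=
    calc ‖y‖ ^ 2 * ‖y‖ ^ 2 = (ofLp y ⬝ᵥ B *ᵥ ofLp x) ^ 2 := by rw [hy, sq]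
      _ ≤ (ofLp x ⬝ᵥ A *ᵥ ofLp x) * (ofLp y ⬝ᵥ C *ᵥ ofLp y) :=
        h.sq_dotProduct_mulVec_le_of_fromBlocks _ _
      _ ≤ (opNorm A * ‖x‖ ^ 2) * (opNorm C * ‖y‖ ^ 2) :=
        mul_le_mul (dotProduct_mulVec_le_opNorm_mul_sq A x)
          (dotProduct_mulVec_le_opNorm_mul_sq C y) hC hA
      _ = opNorm A * opNorm C * ‖x‖ ^ 2 * ‖y‖ ^ 2 := by ring
  rcases (sq_nonneg ‖y‖).eq_or_lt with hy0 | hy0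
  · rw [← hy0]
    exact mul_nonneg (mul_nonneg (opNorm_nonneg A) (opNorm_nonneg C)) (sq_nonneg _)
  · exact le_of_mul_le_mul_right key hy0

theorem opNorm_offdiag_block_le {n m : ℕ}
    (A : Matrix (Fin n) (Fin n) ℝ) (C : Matrix (Fin m) (Fin m) ℝ)
    (B : Matrix (Fin m) (Fin n) ℝ)
    (h : (Matrix.fromBlocks A Bᵀ B C).PosSemidef) :
    opNorm B ≤ Real.sqrt (opNorm A * opNorm C) := by
  have hAC : 0 ≤ opNorm A * opNorm C := mul_nonneg (opNorm_nonneg A) (opNorm_nonneg C)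
  refine ContinuousLinearMap.opNorm_le_bound _ (Real.sqrt_nonneg _) fun x => ?_
  refine le_of_pow_le_pow_left₀ two_ne_zero (by positivity) ?_
  rw [mul_pow, Real.sq_sqrt hAC]
  exact norm_toEuclideanLin_sq_le_of_fromBlocks h x
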